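/- arXiv:1805.04819 — 3 statements merged into one kernel-verified Lean document; each statement's English description precedes it below -/
import Mathlib

section
/- Let σ be a finite sequence of 'session' intervals over time, where at most one session is in progress at any time, and a waiting process p is present throughout an interval [a, b]. If every session established during [a, b] is established by (is led by) some process whose passage overlaps [a, b], and the number of passages overlapping [a, b] is c, then the number of sessions established during [a, b] is at most min(c, n) + 1, where n is the total number of processes and each process leads at most one session per overlapping passage plus the helping bound guarantees at most n + 1 sessions. -/
theorem stmt_5_general {α β : Type*} (n c : ℕ)
    (sessions : Finset α) (overlap : Finset β) (lead : α → β)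
    (hinj : Set.InjOn lead ↑sessions)
    (hmem : ∀ s ∈ sessions, lead s ∈ overlap)
    (hc : overlap.card = c)
    (hn : sessions.card ≤ n + 1) :
    sessions.card ≤ min c n + 1 := by
  have hle_c : sessions.card ≤ c := hc ▸ Finset.card_le_card_of_injOn lead hmem hinj
  omega

/-- Context-switch bound: the sessions established while a process waits inject
(via their leaders) into the `c` overlapping passages, and the helping scheme
bounds them by `n + 1`; hence at most `min c n + 1` sessions. -/
theorem stmt_5 {α β : Type*} [DecidableEq β] (n c : ℕ)
    (sessions : Finset α) (overlap : Finset β) (lead : α → β)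
    (hinj : Set.InjOn lead ↑sessions)
    (hmem : ∀ s ∈ sessions, lead s ∈ overlap)
    (hc : overlap.card = c)
    (hn : sessions.card ≤ n + 1) :
    sessions.card ≤ min c n + 1 :=
  stmt_5_general n c sessions overlap lead hinj hmem hc hn
end

section
/- If an execution is in a homogeneous state (all current and future requests are for the same session), then at most one new session can be established thereafter. -/
/-- Homogeneity: if after time `t₀` every pending request has type `s`, sessions
established after the current one `c₀` have type `s`, and a session `k+1` is
established only if some request at its establishment time conflicts with the
type of session `k`, then no session beyond index `c₀ + 1` is established. -/
theorem stmt_11 {S : Type*} (s : S) (τ : ℕ → S)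
    (established : ℕ → Prop) (estTime : ℕ → ℕ) (req : ℕ → Set S)
    (t₀ c₀ : ℕ)
    (hhom : ∀ t, t₀ ≤ t → ∀ x ∈ req t, x = s)
    (hmono : ∀ k, established (k + 1) → established k)
    (htime : ∀ k, c₀ < k → established k → t₀ ≤ estTime k)
    (hτ : ∀ k, c₀ < k → established k → τ k = s)
    (hrule : ∀ k, established (k + 1) → ∃ x ∈ req (estTime (k + 1)), x ≠ τ k) :
    ∀ k, established k → k ≤ c₀ + 1 := by
  intro k hk
  by_contra! hlt
  obtain ⟨j, rfl⟩ : ∃ j, k = j + 1 := ⟨k - 1, by omega⟩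
  -- Session `j + 1` needs a request conflicting with session `j`, which already has type `s`.
  obtain ⟨x, hx, hconflict⟩ := hrule j hk
  have hxs : x = s := hhom _ (htime _ (by omega) hk) x hx
  have hτj : τ j = s := hτ j (by omega) (hmono j hk)
  exact hconflict (hxs.trans hτj.symm)
end

section
/- If every waiting process either joins the current session or, failing that, causes the current session's CONFLICT flag to be set (and the leader, upon exit, sets the LEADERLESS flag), then every session with at least one conflicting outstanding request eventually closes; moreover, combined with the facts that a closed session's size eventually reaches and stays at zero and that some process then sets the VACANT flag, every closed session eventually adjourns. -/
open Filter

theorem eventually_atTop_of_stable {α : Type*} [Preorder α] {p : α → Prop}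
    (hp : ∀ t t', t ≤ t' → p t → p t') (h : ∃ t, p t) : ∀ᶠ t in atTop, p t :=
  let ⟨t, ht⟩ := h
  (eventually_ge_atTop t).mono fun _ hu => hp t _ hu ht

/-- Liveness: with monotone guard flags `g₁, g₂` eventually set, the counter `c`
eventually permanently 0 once both guards hold, an attempt to set `v` occurring
after stabilization, and attempts succeeding when `g₁ ∧ g₂ ∧ c = 0`, the vacant
flag `v` is eventually set (the session adjourns). -/
theorem stmt_19 (g₁ g₂ v : ℕ → Bool) (c : ℕ → ℕ) (attempt : ℕ → Prop)
    (hm1 : ∀ t t', t ≤ t' → g₁ t = true → g₁ t' = true)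
    (hm2 : ∀ t t', t ≤ t' → g₂ t = true → g₂ t' = true)
    (ha1 : ∃ t, g₁ t = true) (ha2 : ∃ t, g₂ t = true)
    (hzero : ∀ t, g₁ t = true → g₂ t = true → ∃ t₁, t ≤ t₁ ∧ ∀ u, t₁ ≤ u → c u = 0)
    (hattempt : ∀ t, g₁ t = true → g₂ t = true → (∀ u, t ≤ u → c u = 0) →
      ∃ t', t ≤ t' ∧ attempt t')
    (hsucc : ∀ t, attempt t → g₁ t = true → g₂ t = true → c t = 0 → v t = true) :
    ∃ t, v t = true := by
  obtain ⟨T, hclosed⟩ := eventually_atTop.1 <|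
    (eventually_atTop_of_stable hm1 ha1).and (eventually_atTop_of_stable hm2 ha2)
  obtain ⟨t₁, hTt₁, hc⟩ := hzero T (hclosed T le_rfl).1 (hclosed T le_rfl).2
  obtain ⟨t, ht₁t, hat⟩ := hattempt t₁ (hclosed t₁ hTt₁).1 (hclosed t₁ hTt₁).2 hc
  obtain ⟨hg₁, hg₂⟩ := hclosed t (hTt₁.trans ht₁t)
  exact ⟨t, hsucc t hat hg₁ hg₂ (hc t ht₁t)⟩
end
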